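/- arXiv:math/0505019 — 2 statements merged into one kernel-verified Lean document; each statement's English description precedes it below -/
import Mathlib

section
/- Let X ⊂ ℝ² be the closed triangle with vertices a = (−1,0), c = (1,0), f = (0,1), and let S be the piecewise affine map defined by S(x) = A₁x + B₁ on the open subtriangle X₁ with vertices (−1,0),(0,0),(0,1), and S(x) = A₂x + B₂ on the open subtriangle X₂ with vertices (0,0),(1,0),(0,1), where A₁ = ½[[2,−1],[0,1]], A₂ = ½[[2,1],[0,1]], B₁ = (1/2,1/2), B₂ = (−1/2,1/2). Then S maps X₁ and X₂ into X, and for every x in X₁ ∪ X₂ with well-defined infinite orbit, S^n(x) converges to the point (0,1); moreover the distance from S^n(x) to (0,1) is at most C·(1/2)^n · dist(x,(0,1)) for a uniform constant C. -/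
/-- Left open subtriangle with vertices `(-1,0), (0,0), (0,1)`. -/
def X1 : Set (ℝ × ℝ) := {p | p.1 < 0 ∧ 0 < p.2 ∧ p.2 < p.1 + 1}

/-- Right open subtriangle with vertices `(0,0), (1,0), (0,1)`. -/
def X2 : Set (ℝ × ℝ) := {p | 0 < p.1 ∧ 0 < p.2 ∧ p.2 < 1 - p.1}

/-- The closed triangle with vertices `(-1,0), (1,0), (0,1)`. -/
def Xtri : Set (ℝ × ℝ) := {p | 0 ≤ p.2 ∧ p.2 ≤ 1 - |p.1|}

/-- The piecewise affine map of Example 1: `A₁x + B₁` on `X1`, `A₂x + B₂` on `X2`,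
where `A₁ = ½[[2,−1],[0,1]]`, `A₂ = ½[[2,1],[0,1]]`, `B₁ = (1/2,1/2)`, `B₂ = (−1/2,1/2)`. -/
noncomputable def Smap (p : ℝ × ℝ) : ℝ × ℝ :=
  if p.1 < 0 then (p.1 - p.2 / 2 + 1 / 2, p.2 / 2 + 1 / 2)
  else (p.1 + p.2 / 2 - 1 / 2, p.2 / 2 + 1 / 2)

lemma Smap_snd (p : ℝ × ℝ) : (Smap p).2 = p.2 / 2 + 1 / 2 := by
  unfold Smap; split <;> rfl

lemma iter_snd (p : ℝ × ℝ) (n : ℕ) :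
    1 - (Smap^[n] p).2 = (1 - p.2) * (1 / 2) ^ n := by
  induction n with
  | zero => simp
  | succ n ih =>
    rw [Function.iterate_succ_apply', Smap_snd, pow_succ, ← mul_assoc, ← ih]
    ring

lemma mem_bound {p : ℝ × ℝ} (hp : p ∈ X1 ∪ X2) : |p.1| ≤ 1 - p.2 ∧ p.2 ≤ 1 := by
  rcases hp with ⟨h1, h2, h3⟩ | ⟨h1, h2, h3⟩
  · constructor
    · rw [abs_of_neg h1]; linarith
    · linarith
  · constructor
    · rw [abs_of_pos h1]; linarith
    · linarith

/-- `S` maps `X1` and `X2` into the triangle `X`, and every point with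
well-defined infinite orbit converges to `(0,1)` at exponential rate `(1/2)^n`, with a uniform
constant `C`. -/
theorem Smap_orbit_tendsto :
    (∀ p ∈ X1 ∪ X2, Smap p ∈ Xtri) ∧
    ∃ C > (0 : ℝ), ∀ p : ℝ × ℝ, (∀ n : ℕ, Smap^[n] p ∈ X1 ∪ X2) →
      (∀ n : ℕ, dist (Smap^[n] p) ((0, 1) : ℝ × ℝ)
          ≤ C * (1 / 2) ^ n * dist p ((0, 1) : ℝ × ℝ)) ∧
      Filter.Tendsto (fun n => Smap^[n] p) Filter.atTop (nhds ((0, 1) : ℝ × ℝ)) := by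
  constructor
  · intro p hp
    obtain ⟨hb, _⟩ := mem_bound hp
    have hx := abs_le.mp hb
    rcases hp with ⟨h1, h2, h3⟩ | ⟨h1, h2, h3⟩
    · have : Smap p = (p.1 - p.2 / 2 + 1 / 2, p.2 / 2 + 1 / 2) := if_pos h1
      rw [this]
      refine ⟨by dsimp; linarith, ?_⟩
      dsimp
      have : |p.1 - p.2 / 2 + 1 / 2| ≤ 1 / 2 - p.2 / 2 :=
        abs_le.mpr ⟨by linarith, by linarith⟩
      linarith
    · have : Smap p = (p.1 + p.2 / 2 - 1 / 2, p.2 / 2 + 1 / 2) := if_neg (by linarith)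
      rw [this]
      refine ⟨by dsimp; linarith, ?_⟩
      dsimp
      have : |p.1 + p.2 / 2 - 1 / 2| ≤ 1 / 2 - p.2 / 2 :=
        abs_le.mpr ⟨by linarith, by linarith⟩
      linarith
  · refine ⟨1, one_pos, fun p hp => ?_⟩
    have key : ∀ n : ℕ, dist (Smap^[n] p) ((0, 1) : ℝ × ℝ)
        ≤ (1 / 2) ^ n * dist p ((0, 1) : ℝ × ℝ) := by
      intro n
      obtain ⟨hb, hy⟩ := mem_bound (hp n)
      have h0 := mem_bound (hp 0)
      simp only [Function.iterate_zero_apply] at h0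
      have hsnd := iter_snd p n
      have hdist0 : 1 - p.2 ≤ dist p ((0, 1) : ℝ × ℝ) := by
        rw [Prod.dist_eq, Real.dist_eq, Real.dist_eq]
        calc 1 - p.2 ≤ |p.2 - 1| := by rw [abs_sub_comm]; exact le_abs_self _
          _ ≤ _ := le_max_right _ _
      rw [Prod.dist_eq, Real.dist_eq, Real.dist_eq]
      have h1 : |(Smap^[n] p).1 - 0| ≤ (1 / 2) ^ n * dist p ((0, 1) : ℝ × ℝ) := by
        rw [sub_zero]
        calc |(Smap^[n] p).1| ≤ 1 - (Smap^[n] p).2 := hb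
          _ = (1 - p.2) * (1 / 2) ^ n := hsnd
          _ ≤ dist p ((0, 1) : ℝ × ℝ) * (1 / 2) ^ n := by
              apply mul_le_mul_of_nonneg_right hdist0 (by positivity)
          _ = _ := by ring
      have h2 : |(Smap^[n] p).2 - 1| ≤ (1 / 2) ^ n * dist p ((0, 1) : ℝ × ℝ) := by
        rw [abs_sub_comm, abs_of_nonneg (by linarith)]
        calc 1 - (Smap^[n] p).2 = (1 - p.2) * (1 / 2) ^ n := hsnd
          _ ≤ dist p ((0, 1) : ℝ × ℝ) * (1 / 2) ^ n := by
              apply mul_le_mul_of_nonneg_right hdist0 (by positivity)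
          _ = _ := by ring
      exact max_le h1 h2
    refine ⟨fun n => by simpa using key n, ?_⟩
    rw [tendsto_iff_dist_tendsto_zero]
    have hlim : Filter.Tendsto (fun n : ℕ => (1 / 2 : ℝ) ^ n * dist p ((0, 1) : ℝ × ℝ))
        Filter.atTop (nhds 0) := by
      have := (tendsto_pow_atTop_nhds_zero_of_lt_one (by norm_num : (0:ℝ) ≤ 1/2)
        (by norm_num : (1/2:ℝ) < 1)).mul_const (dist p ((0, 1) : ℝ × ℝ))
      simpa using this
    exact squeeze_zero (fun n => dist_nonneg) key hlim
end

section
/- For the map S of Example 1 (on the triangle with vertices (−1,0),(1,0),(0,1), with branches A₁x + B₁ on the left subtriangle and A₂x + B₂ on the right subtriangle, A₁ = ½[[2,−1],[0,1]], A₂ = ½[[2,1],[0,1]], B₁ = (1/2,1/2), B₂ = (−1/2,1/2)), the number of continuity domains of S^n whose closure contains the point (0,1) equals 2^n; in particular the multiplicity entropy of S is log 2. -/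
/-- The continuity domain of `S^n` with itinerary `w` (elements of the continuity
partition `Z^n` are exactly the nonempty such sets). -/
def itinDom (n : ℕ) (w : Fin n → Fin 2) : Set (ℝ × ℝ) :=
  {p | ∀ k : Fin n, Smap^[(k : ℕ)] p ∈ (if w k = 0 then X1 else X2)}

/-!
The map sends the segment `v ↦ (t v, 1 - v)`, `0 < v < 1`, which enters the apex `(0,1)` with
slope parameter `t ∈ (-1, 1)`, onto the segment `v ↦ (T t · v/2, 1 - v/2)`, where
`T t = 2t + 1` for `t < 0` and `T t = 2t - 1` for `t ≥ 0` is the doubling map on `(-1, 1)`.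
Its two inverse branches `s ↦ (s - 1)/2` and `s ↦ (s + 1)/2` map `(-1, 1)` into `(-1, 0)`
and `(0, 1)`, the slopes of segments in the left and right subtriangles; choosing them along
`w` backwards shows that every itinerary `w` is realised by a whole segment ending at the
apex, so the apex lies in the closure of each of the `2^n` continuity domains of `S^n`.
-/

open Filter Topology

lemma mem_itinDom_succ {n : ℕ} {w : Fin (n + 1) → Fin 2} {p : ℝ × ℝ} :
    p ∈ itinDom (n + 1) w ↔
      p ∈ (if w 0 = 0 then X1 else X2) ∧ Smap p ∈ itinDom n (Fin.tail w) :=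
  Fin.forall_fin_succ

section Ray

variable {s v : ℝ}

lemma ray_mem_X1 (hs₁ : -1 < s) (hs₂ : s < 1) (hv : 0 < v) (hv1 : v < 1) :
    ((s - 1) / 2 * v, 1 - v) ∈ X1 :=
  ⟨by nlinarith, by linarith, by nlinarith⟩

lemma ray_mem_X2 (hs₁ : -1 < s) (hs₂ : s < 1) (hv : 0 < v) (hv1 : v < 1) :
    ((s + 1) / 2 * v, 1 - v) ∈ X2 :=
  ⟨by nlinarith, by linarith, by nlinarith⟩

lemma Smap_ray_left (hs : s < 1) (hv : 0 < v) :
    Smap ((s - 1) / 2 * v, 1 - v) = (s * (v / 2), 1 - v / 2) := by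
  have hneg : (s - 1) / 2 * v < 0 := mul_neg_of_neg_of_pos (by linarith) hv
  simp only [Smap, if_pos hneg, Prod.mk.injEq]
  constructor <;> ring

lemma Smap_ray_right (hs : -1 < s) (hv : 0 < v) :
    Smap ((s + 1) / 2 * v, 1 - v) = (s * (v / 2), 1 - v / 2) := by
  have hpos : 0 < (s + 1) / 2 * v := mul_pos (by linarith) hv
  simp only [Smap, if_neg hpos.not_gt, Prod.mk.injEq]
  constructor <;> ring

end Ray

theorem exists_ray_subset_itinDom (n : ℕ) (w : Fin n → Fin 2) :
    ∃ t : ℝ, |t| < 1 ∧ ∀ v : ℝ, 0 < v → v < 1 → (t * v, 1 - v) ∈ itinDom n w := by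
  induction n with
  | zero => exact ⟨0, by simp, fun v _ _ k => k.elim0⟩
  | succ n ih =>
    obtain ⟨s, hs_abs, hs⟩ := ih (Fin.tail w)
    obtain ⟨hs₁, hs₂⟩ := abs_lt.mp hs_abs
    have hhalf : ∀ v : ℝ, 0 < v → v < 1 → (s * (v / 2), 1 - v / 2) ∈ itinDom n (Fin.tail w) :=
      fun v hv hv1 => hs (v / 2) (by linarith) (by linarith)
    by_cases hw : w 0 = 0
    · refine ⟨(s - 1) / 2, abs_lt.mpr ⟨by linarith, by linarith⟩, fun v hv hv1 => ?_⟩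
      rw [mem_itinDom_succ, if_pos hw, Smap_ray_left hs₂ hv]
      exact ⟨ray_mem_X1 hs₁ hs₂ hv hv1, hhalf v hv hv1⟩
    · refine ⟨(s + 1) / 2, abs_lt.mpr ⟨by linarith, by linarith⟩, fun v hv hv1 => ?_⟩
      rw [mem_itinDom_succ, if_neg hw, Smap_ray_right hs₁ hv]
      exact ⟨ray_mem_X2 hs₁ hs₂ hv hv1, hhalf v hv hv1⟩

theorem apex_mem_closure_itinDom (n : ℕ) (w : Fin n → Fin 2) :
    ((0, 1) : ℝ × ℝ) ∈ closure (itinDom n w) := by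
  obtain ⟨t, -, ht⟩ := exists_ray_subset_itinDom n w
  have hlim : Tendsto (fun v : ℝ => (t * v, 1 - v)) (𝓝[>] 0) (𝓝 (0, 1)) := by
    refine (Continuous.tendsto' ?_ 0 _ (by simp)).mono_left nhdsWithin_le_nhds
    fun_prop
  have hray : ∀ᶠ v in 𝓝[>] (0 : ℝ), (t * v, 1 - v) ∈ itinDom n w := by
    filter_upwards [Ioo_mem_nhdsGT (zero_lt_one' ℝ)] with v hv
    exact ht v hv.1 hv.2
  exact mem_closure_of_tendsto hlim hray

/-- For the map `S` of Example 1, the number of continuity domains of `S^n`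
whose closure contains `(0,1)` equals `2^n`; in particular the multiplicity entropy of `S`
is `log 2`. -/
theorem Smap_multiplicity :
    (∀ n : ℕ, Nat.card {w : Fin n → Fin 2 | ((0, 1) : ℝ × ℝ) ∈ closure (itinDom n w)} = 2 ^ n) ∧
    Filter.Tendsto
      (fun n : ℕ => Real.log
          (Nat.card {w : Fin n → Fin 2 | ((0, 1) : ℝ × ℝ) ∈ closure (itinDom n w)}) / n)
      Filter.atTop (nhds (Real.log 2)) := by
  have hcard : ∀ n : ℕ,
      Nat.card {w : Fin n → Fin 2 | ((0, 1) : ℝ × ℝ) ∈ closure (itinDom n w)} = 2 ^ n := by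
    intro n
    simp [apex_mem_closure_itinDom]
  refine ⟨hcard, tendsto_const_nhds.congr' ?_⟩
  filter_upwards [eventually_ne_atTop 0] with n hn
  rw [hcard n]
  push_cast
  rw [Real.log_pow]
  field_simp
end
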